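/- Let ≤ be a relation on a set V satisfying antisymmetry and such that the associated strict relation < admits no cycles R₁ < ⋯ < R_k < R₁ for k ≥ 2. Define ≤₂ on V × ℤ by (R_b, n_b) ≤₂ (R_a, n_a) iff (R_b ≤ R_a and n_b = n_a) or (R_a ≤ R_b and n_a = n_b − 1). Then ≤₂ admits no cycles: there is no sequence x₁ <₂ x₂ <₂ ⋯ <₂ x_k <₂ x₁ with k ≥ 2, where <₂ is the strict version of ≤₂. -/

import Mathlib

/-!
Along a strict `≤₂`-step the integer coordinate never increases, so around a cycle it is
constant. A strict `≤₂`-step that keeps the integer coordinate is a strict `≤`-step of the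
first coordinates, hence these form a forbidden cycle in `V`.
-/

/-- The relation `≤₂` on `V × ℤ` built from a relation `le` on `V`:
`(R_b, n_b) ≤₂ (R_a, n_a)` iff `(R_b ≤ R_a and n_b = n_a)` or
`(R_a ≤ R_b and n_a = n_b − 1)`. -/
def leTwo {V : Type*} (le : V → V → Prop) (b a : V × ℤ) : Prop :=
  (le b.1 a.1 ∧ b.2 = a.2) ∨ (le a.1 b.1 ∧ a.2 = b.2 - 1)

/-- The strict relation associated to a reflexive relation. -/
def strictOf {α : Type*} (le : α → α → Prop) (x y : α) : Prop :=
  le x y ∧ x ≠ y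

section CycleOrder

variable {α : Type*} {k : ℕ} {φ : ℕ → α}

theorem antitoneOn_Iio_of_succ_le [Preorder α] (hstep : ∀ i, i + 1 < k → φ (i + 1) ≤ φ i) :
    AntitoneOn φ (Set.Iio k) := by
  intro i _ j hj hij
  induction j, hij using Nat.le_induction with
  | base => exact le_rfl
  | succ j _ ih => exact (hstep j hj).trans (ih (Nat.lt_of_succ_lt hj))

theorem apply_eq_apply_zero_of_succ_le_of_le_last [PartialOrder α]
    (hstep : ∀ i, i + 1 < k → φ (i + 1) ≤ φ i) (hclose : φ 0 ≤ φ (k - 1))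
    {i : ℕ} (hi : i < k) : φ i = φ 0 := by
  have hanti := antitoneOn_Iio_of_succ_le hstep
  exact le_antisymm (hanti (Nat.zero_lt_of_lt hi) hi (Nat.zero_le i))
    (hclose.trans (hanti hi (Nat.sub_one_lt_of_lt hi) (Nat.le_sub_one_of_lt hi)))

end CycleOrder

section LeTwo

variable {V : Type*} {le : V → V → Prop} {b a : V × ℤ}

theorem leTwo.snd_le (h : leTwo le b a) : a.2 ≤ b.2 := by
  rcases h with ⟨_, h⟩ | ⟨_, h⟩ <;> omega

theorem strictOf_fst_of_strictOf_leTwo (h : strictOf (leTwo le) b a) (hsnd : a.2 = b.2) :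
    strictOf le b.1 a.1 := by
  obtain ⟨⟨hle, -⟩ | ⟨-, hdrop⟩, hne⟩ := h
  · exact ⟨hle, fun hfst => hne (Prod.ext hfst hsnd.symm)⟩
  · omega

end LeTwo

theorem leTwo_no_cycles_general {V : Type*} (le : V → V → Prop)
    (hnocycle : ∀ k : ℕ, 2 ≤ k → ∀ f : ℕ → V,
      (∀ i, i + 1 < k → strictOf le (f i) (f (i + 1))) →
      ¬ strictOf le (f (k - 1)) (f 0)) :
    ∀ k : ℕ, 2 ≤ k → ∀ g : ℕ → V × ℤ,
      (∀ i, i + 1 < k → strictOf (leTwo le) (g i) (g (i + 1))) →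
      ¬ strictOf (leTwo le) (g (k - 1)) (g 0) := by
  intro k hk g hsteps hclose
  have hsnd : ∀ i < k, (g i).2 = (g 0).2 := fun i hi =>
    apply_eq_apply_zero_of_succ_le_of_le_last (φ := fun i => (g i).2)
      (fun j hj => (hsteps j hj).1.snd_le) hclose.1.snd_le hi
  refine hnocycle k hk (fun i => (g i).1) (fun i hi => ?_) ?_
  · exact strictOf_fst_of_strictOf_leTwo (hsteps i hi) (by rw [hsnd _ hi, hsnd i (by omega)])
  · exact strictOf_fst_of_strictOf_leTwo hclose (by rw [hsnd (k - 1) (by omega)])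

/-- If `le` is a reflexive antisymmetric relation on `V` whose strict part admits no
cycles `R₁ < ⋯ < R_k < R₁` (`k ≥ 2`), then the strict part of `≤₂` on `V × ℤ`
admits no cycles either. -/
theorem leTwo_no_cycles {V : Type*} (le : V → V → Prop)
    (hrefl : ∀ x, le x x)
    (hanti : ∀ x y, le x y → le y x → x = y)
    (hnocycle : ∀ k : ℕ, 2 ≤ k → ∀ f : ℕ → V,
      (∀ i, i + 1 < k → strictOf le (f i) (f (i + 1))) →
      ¬ strictOf le (f (k - 1)) (f 0)) :
    ∀ k : ℕ, 2 ≤ k → ∀ g : ℕ → V × ℤ,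
      (∀ i, i + 1 < k → strictOf (leTwo le) (g i) (g (i + 1))) →
      ¬ strictOf (leTwo le) (g (k - 1)) (g 0) :=
  leTwo_no_cycles_general le hnocycle
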